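/- arXiv:math/0507565 — 2 statements merged into one kernel-verified Lean document; each statement's English description precedes it below -/
import Mathlib

section
/- Let Γ be a shifted simplicial complex on [n] such that all reduced Betti numbers of Γ vanish. Then every facet of Γ contains the vertex n, i.e., Γ is a cone with apex n: Γ = lk_Γ(n) ∗ {n}. -/
/-- A simplicial complex on a subset of ℕ: a collection of finite sets closed under inclusion. -/
def IsComplex (Γ : Finset (Finset ℕ)) : Prop :=
  ∀ F ∈ Γ, ∀ G ⊆ F, G ∈ Γ

/-- Γ is shifted on vertex set [n]: replacing a vertex by a larger one stays in Γ. -/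
def IsShifted (Γ : Finset (Finset ℕ)) (n : ℕ) : Prop :=
  ∀ F ∈ Γ, ∀ i ∈ F, ∀ j, i < j → j ≤ n → insert j (F.erase i) ∈ Γ

/-- The facets (maximal faces) of Γ. -/
def facets (Γ : Finset (Finset ℕ)) : Finset (Finset ℕ) :=
  Γ.filter fun F => ∀ G ∈ Γ, F ⊆ G → F = G

/-- The antistar of a vertex. -/
def ast (Γ : Finset (Finset ℕ)) (v : ℕ) : Finset (Finset ℕ) :=
  Γ.filter fun F => v ∉ F

/-- The link of a vertex. -/
def lk (Γ : Finset (Finset ℕ)) (v : ℕ) : Finset (Finset ℕ) :=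
  Γ.filter fun F => v ∉ F ∧ insert v F ∈ Γ

/-- The cone over Γ with apex v. -/
def cone (Γ : Finset (Finset ℕ)) (v : ℕ) : Finset (Finset ℕ) :=
  Γ ∪ Γ.image (insert v)

/-- The simplicial boundary operator on the free vector space with basis all finite subsets of ℕ. -/
noncomputable def sBd (k : Type) [Field k] :
    (Finset ℕ →₀ k) →ₗ[k] (Finset ℕ →₀ k) :=
  Finsupp.lsum k fun F => LinearMap.toSpanSingleton k (Finset ℕ →₀ k)
    (∑ x ∈ F, ((-1 : k) ^ ((F.filter (· < x)).card)) • Finsupp.single (F.erase x) (1 : k))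

/-- Chains supported on faces of Γ of cardinality c. -/
noncomputable def chainSub (k : Type) [Field k] (Γ : Finset (Finset ℕ)) (c : ℕ) :
    Submodule k (Finset ℕ →₀ k) :=
  Finsupp.supported k k {F | F ∈ Γ ∧ F.card = c}

/-- Cycles in cardinality degree c. -/
noncomputable def cyc (k : Type) [Field k] (Γ : Finset (Finset ℕ)) (c : ℕ) :
    Submodule k (Finset ℕ →₀ k) :=
  chainSub k Γ c ⊓ LinearMap.ker (sBd k)

/-- The reduced Betti number of Γ in "cardinality" degree c (so the reduced simplicial
Betti number β_i(Γ) over k is `bettiC k Γ (i+1)`): the dimension of the homology (cycles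
modulo boundaries) of the reduced simplicial chain complex (the empty set is a face, so
the augmentation is built in) with coefficients in the field k. -/
noncomputable def bettiC (k : Type) [Field k] (Γ : Finset (Finset ℕ)) (c : ℕ) : ℕ :=
  Module.finrank k
    (@HasQuotient.Quotient ↥(cyc k Γ c) (Submodule k ↥(cyc k Γ c)) (Submodule.hasQuotient (M := ↥(cyc k Γ c)))
      (Submodule.comap (cyc k Γ c).subtype
        (Submodule.map (sBd k) (chainSub k Γ (c + 1)))))

noncomputable def sgn (k : Type) [Field k] (G : Finset ℕ) (x : ℕ) : k :=
  (-1) ^ ((G.filter (· < x)).card)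

noncomputable def bvec (k : Type) [Field k] (G : Finset ℕ) : Finset ℕ →₀ k :=
  ∑ x ∈ G, sgn k G x • Finsupp.single (G.erase x) 1

lemma sBd_single (k : Type) [Field k] (G : Finset ℕ) :
    sBd k (Finsupp.single G (1:k)) = bvec k G := by
  simp [sBd, bvec, sgn, Finsupp.lsum_single, LinearMap.toSpanSingleton_apply]

lemma sBd_apply (k : Type) [Field k] (w : Finset ℕ →₀ k) :
    sBd k w = w.sum fun G a => a • bvec k G := by
  rw [sBd]
  rw [Finsupp.lsum_apply]
  refine Finsupp.sum_congr fun G _ => ?_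
  simp [bvec, sgn, LinearMap.toSpanSingleton_apply]

lemma filter_erase' (G : Finset ℕ) (p : ℕ → Prop) [DecidablePred p] (a : ℕ) :
    (G.erase a).filter p = (G.filter p).erase a := by
  ext x; simp [Finset.mem_filter, Finset.mem_erase]; tauto

lemma sgn_helper (k : Type) [Field k] {G : Finset ℕ} {x y : ℕ}
    (hy : y ∈ G) (hxy : y < x) :
    sgn k G x * sgn k (G.erase x) y = -(sgn k G y * sgn k (G.erase y) x) := by
  have h1 : sgn k (G.erase x) y = sgn k G y := by
    unfold sgn
    congr 1
    rw [filter_erase', Finset.erase_eq_of_notMem]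
    simp only [Finset.mem_filter, not_and]
    intro _; omega
  have h2 : ((G.erase y).filter (· < x)).card + 1 = (G.filter (· < x)).card := by
    rw [filter_erase', Finset.card_erase_of_mem (by simp [Finset.mem_filter, hy, hxy])]
    have : 0 < (G.filter (· < x)).card := Finset.card_pos.2 ⟨y, by simp [Finset.mem_filter, hy, hxy]⟩
    omega
  rw [h1]
  unfold sgn
  rw [← h2, pow_succ]
  ring

lemma sgn_anti (k : Type) [Field k] {G : Finset ℕ} {x y : ℕ}
    (hx : x ∈ G) (hy : y ∈ G) (hne : x ≠ y) :
    sgn k G x * sgn k (G.erase x) y + sgn k G y * sgn k (G.erase y) x = 0 := by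
  rcases lt_or_gt_of_ne hne with h | h
  · rw [sgn_helper k hx h]; ring
  · rw [sgn_helper k hy h]; ring

lemma sBd_bvec (k : Type) [Field k] (G : Finset ℕ) : sBd k (bvec k G) = 0 := by
  rw [bvec, map_sum]
  simp only [map_smul, sBd_single]
  have step : ∀ x ∈ G, sgn k G x • bvec k (G.erase x)
      = ∑ y ∈ G, (if x = y then 0 else
          (sgn k G x * sgn k (G.erase x) y) • Finsupp.single ((G.erase x).erase y) (1:k)) := by
    intro x hx
    rw [bvec, Finset.smul_sum]
    rw [← Finset.sum_erase G (f := fun y => if x = y then 0 else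
          (sgn k G x * sgn k (G.erase x) y) • Finsupp.single ((G.erase x).erase y) (1:k)) (a := x)
        (by simp)]
    refine Finset.sum_congr rfl fun y hy => ?_
    rw [if_neg (by exact fun h => (Finset.mem_erase.1 hy).1 h.symm), smul_smul]
  rw [Finset.sum_congr rfl step, ← Finset.sum_product']
  refine Finset.sum_involution (fun p _ => (p.2, p.1)) ?_ ?_ ?_ ?_
  · rintro ⟨x, y⟩ hp
    by_cases h : x = y
    · simp [h]
    · rw [if_neg h, if_neg (Ne.symm h)]
      rw [Finset.erase_right_comm (a := y)]
      rw [← add_smul]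
      have := sgn_anti k (Finset.mem_product.1 hp).1 (Finset.mem_product.1 hp).2 h
      rw [this, zero_smul]
  · rintro ⟨x, y⟩ hp hne
    by_cases h : x = y
    · exact absurd (by simp [h]) hne
    · simp [Prod.ext_iff]; intro h'
      exact fun h2 => h h2
  · rintro ⟨x, y⟩ hp
    simp only [Finset.mem_product] at hp ⊢; exact ⟨hp.2, hp.1⟩
  · rintro ⟨x, y⟩ _; rfl

lemma bvec_coeff (k : Type) [Field k] (G A : Finset ℕ) :
    bvec k G A = ∑ x ∈ G, (if G.erase x = A then sgn k G x else 0) := by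
  rw [bvec, Finsupp.finset_sum_apply]
  refine Finset.sum_congr rfl fun x hx => ?_
  rw [Finsupp.smul_apply, Finsupp.single_apply]
  by_cases h : G.erase x = A <;> simp [h]

lemma fd_chainSub (k : Type) [Field k] (Γ : Finset (Finset ℕ)) (c : ℕ) :
    FiniteDimensional k (chainSub k Γ c) := by
  have hfin : {F : Finset ℕ | F ∈ Γ ∧ F.card = c}.Finite :=
    Set.Finite.subset Γ.finite_toSet fun F hF => hF.1
  have := hfin.fintype
  exact Module.Finite.equiv (Finsupp.supportedEquivFinsupp _).symm

lemma facet_mem_n (k : Type) [Field k] (n : ℕ)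
    (Γ : Finset (Finset ℕ))
    (hV : ∀ F ∈ Γ, F ⊆ Finset.Icc 1 n) (hsh : IsShifted Γ n)
    (hb : ∀ c : ℕ, bettiC k Γ c = 0) :
    ∀ F ∈ facets Γ, n ∈ F := by
  intro F hF
  by_contra hn
  obtain ⟨hFΓ, hmax⟩ := Finset.mem_filter.1 hF
  set c := F.card with hc
  set S := insert n F with hS
  have hScard : S.card = c + 1 := Finset.card_insert_of_notMem hn
  set z := bvec k S with hzdef
  -- z lies in the chains of Γ
  have hz_chain : z ∈ chainSub k Γ c := by
    rw [chainSub, Finsupp.mem_supported]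
    intro A hA
    have hA' := Finsupp.support_finset_sum hA
    obtain ⟨x, hxS, hAx⟩ := Finset.mem_biUnion.1 hA'
    have hAx' : A = S.erase x := by
      have := Finsupp.support_smul hAx
      rw [Finsupp.support_single_ne_zero _ one_ne_zero] at this
      simpa using this
    subst hAx'
    constructor
    · by_cases hxn : x = n
      · subst hxn; rw [Finset.erase_insert hn]; exact hFΓ
      · have hxF : x ∈ F := by
          rcases Finset.mem_insert.1 hxS with h | h
          · exact absurd h hxn
          · exact h
        have hxlt : x < n := by
          have := hV F hFΓ hxF
          have := Finset.mem_Icc.1 this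
          omega
        rw [Finset.erase_insert_of_ne (Ne.symm hxn)]
        exact hsh F hFΓ x hxF n hxlt le_rfl
    · rw [Finset.card_erase_of_mem hxS, hScard]
      omega
  have hz_ker : sBd k z = 0 := by
    rw [hzdef, sBd_bvec]
  -- z has nonzero coefficient at F
  have hzF : z F = sgn k S n := by
    rw [hzdef, bvec_coeff]
    rw [Finset.sum_eq_single_of_mem n (Finset.mem_insert_self n F)]
    · rw [if_pos (Finset.erase_insert hn)]
    · intro x hxS hxn
      rw [if_neg]
      intro hEq
      have : n ∈ S.erase x := Finset.mem_erase.2 ⟨Ne.symm hxn, Finset.mem_insert_self n F⟩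
      rw [hEq] at this
      exact hn this
  have hzF0 : z F ≠ 0 := by
    rw [hzF, sgn]
    exact pow_ne_zero _ (by norm_num)
  -- finite-dimensionality and vanishing betti number
  haveI := fd_chainSub k Γ c
  haveI : FiniteDimensional k (cyc k Γ c) :=
    Submodule.finiteDimensional_of_le (inf_le_left : cyc k Γ c ≤ chainSub k Γ c)
  have hsub : Subsingleton
      (@HasQuotient.Quotient ↥(cyc k Γ c) (Submodule k ↥(cyc k Γ c)) (Submodule.hasQuotient (M := ↥(cyc k Γ c)))
        (Submodule.comap (cyc k Γ c).subtype
          (Submodule.map (sBd k) (chainSub k Γ (c + 1))))) := by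
    rw [← Module.finrank_zero_iff (R := k)]
    exact hb c
  have hzz : (⟨z, ⟨hz_chain, LinearMap.mem_ker.2 hz_ker⟩⟩ : cyc k Γ c) ∈
      Submodule.comap (cyc k Γ c).subtype
        (Submodule.map (sBd k) (chainSub k Γ (c + 1))) := by
    exact (Submodule.Quotient.mk_eq_zero _).1 (hsub.elim _ _)
  rw [Submodule.mem_comap] at hzz
  obtain ⟨w, hw, hwz⟩ := hzz
  -- but any boundary has zero coefficient at the facet F
  have : z F = 0 := by
    have hwF : (sBd k w) F = 0 := by
      rw [sBd_apply, Finsupp.sum_apply, Finsupp.sum]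
      refine Finset.sum_eq_zero fun G hG => ?_
      simp only [chainSub, Finsupp.mem_supported] at hw
      obtain ⟨hGΓ, hGc⟩ := hw hG
      have hbv : bvec k G F = 0 := by
        rw [bvec_coeff]
        refine Finset.sum_eq_zero fun x hx => ?_
        rw [if_neg]
        intro hEq
        have hFG : F ⊆ G := hEq ▸ Finset.erase_subset x G
        have := hmax G hGΓ hFG
        rw [this] at hc
        omega
      rw [Finsupp.smul_apply, hbv, smul_zero]
    have hwz' : sBd k w = z := hwz
    rw [← hwz']
    exact hwF
  exact hzF0 this

/-- If Γ is a shifted complex on [n] all of whose reduced Betti numbers over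
a field k vanish, then every facet of Γ contains n, i.e. Γ is the cone lk_Γ(n) ∗ {n}. -/
theorem shifted_acyclic_is_cone (k : Type) [Field k] (n : ℕ)
    (Γ : Finset (Finset ℕ)) (hcx : IsComplex Γ)
    (hV : ∀ F ∈ Γ, F ⊆ Finset.Icc 1 n) (hsh : IsShifted Γ n)
    (hb : ∀ c : ℕ, bettiC k Γ c = 0) :
    (∀ F ∈ facets Γ, n ∈ F) ∧ Γ = cone (lk Γ n) n := by
  have h1 := facet_mem_n k n Γ hV hsh hb
  refine ⟨h1, ?_⟩
  ext F
  constructor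
  · intro hFΓ
    -- extend F to a maximal face G, which contains n
    obtain ⟨G, hGs, hGmax⟩ := Finset.exists_max_image (Γ.filter (F ⊆ ·)) Finset.card
      ⟨F, Finset.mem_filter.2 ⟨hFΓ, Finset.Subset.refl F⟩⟩
    obtain ⟨hGΓ, hFG⟩ := Finset.mem_filter.1 hGs
    have hGfacet : G ∈ facets Γ := by
      refine Finset.mem_filter.2 ⟨hGΓ, fun G' hG' hGG' => ?_⟩
      refine Finset.eq_of_subset_of_card_le hGG' ?_
      exact hGmax G' (Finset.mem_filter.2 ⟨hG', hFG.trans hGG'⟩)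
    have hnG : n ∈ G := h1 G hGfacet
    have hins : insert n F ∈ Γ :=
      hcx G hGΓ (insert n F) (Finset.insert_subset hnG hFG)
    by_cases hnF : n ∈ F
    · refine Finset.mem_union_right _ (Finset.mem_image.2 ⟨F.erase n, ?_, Finset.insert_erase hnF⟩)
      refine Finset.mem_filter.2 ⟨hcx F hFΓ _ (Finset.erase_subset n F), ?_, ?_⟩
      · exact Finset.notMem_erase n F
      · rw [Finset.insert_erase hnF]; exact hFΓ
    · exact Finset.mem_union_left _ (Finset.mem_filter.2 ⟨hFΓ, hnF, hins⟩)
  · intro hF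
    rcases Finset.mem_union.1 hF with h | h
    · exact (Finset.mem_filter.1 h).1
    · obtain ⟨G, hG, rfl⟩ := Finset.mem_image.1 h
      exact (Finset.mem_filter.1 hG).2.2
end

section
/- Let Γ be a USLI complex on [n] with I_Γ = L(k_•), last nonzero entry k_d, and R_d = d + Σ_{i≤d} k_i = n+1. Then the reduced Euler characteristic of Γ equals (−1)^{d−2}, i.e., Σ_{j≥−1} (−1)^j f_j(Γ) = (−1)^d. -/
/-- Monomials in the variables x_i (i ≥ 1) are modelled as multisets of variable indices;
`m ≤ m'` (multiset inclusion) is divisibility.  `monLexGT m m'` says m >_lex m' in the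
lexicographic order on monomials of S (smaller variable indices are lex-larger). -/
def monLexGT (m m' : Multiset ℕ) : Prop :=
  List.Lex (· < ·) (m.sort (· ≤ ·)) (m'.sort (· ≤ ·))

/-- m >_grlex m' in the graded lexicographic order (lower degree monomials are larger). -/
def gradedLexGT (m m' : Multiset ℕ) : Prop :=
  Multiset.card m < Multiset.card m' ∨
    (Multiset.card m = Multiset.card m' ∧ monLexGT m m')

/-- A set of monomials forms a monomial ideal iff it is upward closed under divisibility. -/
def IsMonIdeal (I : Set (Multiset ℕ)) : Prop :=
  ∀ m ∈ I, ∀ m' : Multiset ℕ, m ≤ m' → m' ∈ I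

/-- The minimal generators of a monomial ideal: monomials of I not properly divisible by
a monomial of I. -/
def minGen (I : Set (Multiset ℕ)) : Set (Multiset ℕ) :=
  {m ∈ I | ∀ m' ∈ I, m' ≤ m → m' = m}

/-- The monomial ideal generated by a set of monomials. -/
def idealGen (G : Set (Multiset ℕ)) : Set (Multiset ℕ) :=
  {m | ∃ g ∈ G, g ≤ m}

/-- A universal squarefree lexsegment ideal (USLI): a squarefree monomial ideal of
S = k[x_i : i ∈ ℕ], finitely generated in each degree, such that together with any
monomial it contains every lex-larger squarefree monomial of the same degree. -/
def IsUSLI (L : Set (Multiset ℕ)) : Prop :=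
  IsMonIdeal L ∧
  (∀ m ∈ minGen L, m.Nodup ∧ ∀ x ∈ m, 1 ≤ x) ∧
  (∀ d : ℕ, {m ∈ minGen L | Multiset.card m = d}.Finite) ∧
  (∀ m ∈ L, ∀ m' : Multiset ℕ, m'.Nodup → (∀ x ∈ m', 1 ≤ x) →
    Multiset.card m' = Multiset.card m → monLexGT m' m → m' ∈ L)

/-- A squarefree strongly stable monomial ideal: all minimal generators are squarefree
(in positive variables), and exchanging a variable of a minimal generator for a smaller
missing one stays in the ideal. -/
def IsSqStable (I : Set (Multiset ℕ)) : Prop :=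
  IsMonIdeal I ∧
  (∀ m ∈ minGen I, m.Nodup ∧ ∀ x ∈ m, 1 ≤ x) ∧
  (∀ m ∈ minGen I, ∀ i j : ℕ, 1 ≤ i → i < j → j ∈ m → i ∉ m →
    (i ::ₘ m.erase j) ∈ I)

/-- The largest variable index dividing a monomial. -/
def maxVar (u : Multiset ℕ) : ℕ := u.toFinset.sup id

lemma usli_lex_list : ∀ (l1 : List ℕ) (l2 : List ℕ), l1.Pairwise (· < ·) → l2.Pairwise (· < ·) →
    l1.length = l2.length → ∀ m, m ∈ l1 → m ∉ l2 →
    (∀ z, z < m → (z ∈ l1 ↔ z ∈ l2)) → List.Lex (· < ·) l1 l2 := by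
  intro l1
  induction l1 with
  | nil => intro l2 _ _ _ m hm; simp at hm
  | cons a t1 ih =>
    intro l2 h1 h2 hlen m hm hm2 hz
    cases l2 with
    | nil => simp at hlen
    | cons b t2 =>
      rcases lt_trichotomy a b with hab | hab | hab
      · exact List.Lex.rel hab
      · subst hab
        have ha1 : ∀ z ∈ t1, a < z := fun z hz => (List.pairwise_cons.mp h1).1 z hz
        have ha2 : ∀ z ∈ t2, a < z := fun z hz => (List.pairwise_cons.mp h2).1 z hz
        have hma : m ≠ a := by rintro rfl; exact hm2 (List.mem_cons_self)
        have hmt1 : m ∈ t1 := by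
          rcases List.mem_cons.mp hm with h | h
          · exact absurd h hma
          · exact h
        refine List.Lex.cons (ih t2 (List.pairwise_cons.mp h1).2 (List.pairwise_cons.mp h2).2
          (by simpa using hlen) m hmt1 (fun h => hm2 (List.mem_cons_of_mem _ h)) ?_)
        intro z hzm
        constructor
        · intro hzt1
          rcases List.mem_cons.mp ((hz z hzm).mp (List.mem_cons_of_mem _ hzt1)) with h | h
          · subst h; exact absurd (ha1 z hzt1) (lt_irrefl z)
          · exact h
        · intro hzt2
          rcases List.mem_cons.mp ((hz z hzm).mpr (List.mem_cons_of_mem _ hzt2)) with h | h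
          · subst h; exact absurd (ha2 z hzt2) (lt_irrefl z)
          · exact h
      · exfalso
        rcases lt_trichotomy b m with hbm | hbm | hbm
        · have hb1 : b ∈ a :: t1 := (hz b hbm).mpr (List.mem_cons_self)
          rcases List.mem_cons.mp hb1 with h | h
          · omega
          · exact absurd ((List.pairwise_cons.mp h1).1 b h) (by omega)
        · exact hm2 (hbm ▸ List.mem_cons_self)
        · rcases List.mem_cons.mp hm with h | h
          · omega
          · have := (List.pairwise_cons.mp h1).1 m h; omega

lemma usli_lex_finset {F G : Finset ℕ} (hcard : F.card = G.card) {m : ℕ}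
    (hmF : m ∈ F) (hmG : m ∉ G) (hz : ∀ z, z < m → (z ∈ F ↔ z ∈ G)) :
    monLexGT F.val G.val := by
  have h := usli_lex_list (F.sort (· ≤ ·)) (G.sort (· ≤ ·)) (Finset.sortedLT_sort F).pairwise
    (Finset.sortedLT_sort G).pairwise (by simp [Finset.length_sort, hcard]) m
    (by simpa [Finset.mem_sort] using hmF) (by simpa [Finset.mem_sort] using hmG)
    (by intro z hzm; simpa [Finset.mem_sort] using hz z hzm)
  exact h

section
variable {k R : ℕ → ℕ}

lemma usli_R0 (hR : ∀ j, R j = j + ∑ i ∈ Finset.Icc 1 j, k i) : R 0 = 0 := by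
  rw [hR]; simp

lemma usli_Rsucc (hR : ∀ j, R j = j + ∑ i ∈ Finset.Icc 1 j, k i) (j : ℕ) :
    R (j + 1) = R j + 1 + k (j + 1) := by
  have h : ∑ i ∈ Finset.Icc 1 (j + 1), k i = k (j + 1) + ∑ i ∈ Finset.Icc 1 j, k i := by
    rw [← Finset.insert_Icc_right_eq_Icc_add_one (by omega), Finset.sum_insert (by simp)]
  rw [hR, hR, h]; omega

lemma usli_Rmono (hR : ∀ j, R j = j + ∑ i ∈ Finset.Icc 1 j, k i) : StrictMono R := by
  apply strictMono_nat_of_lt_succ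
  intro m; have := usli_Rsucc hR m; omega

lemma usli_Rge (hR : ∀ j, R j = j + ∑ i ∈ Finset.Icc 1 j, k i) (j : ℕ) : j ≤ R j := by
  rw [hR]; omega

lemma usli_cover (hR : ∀ j, R j = j + ∑ i ∈ Finset.Icc 1 j, k i) :
    ∀ s c, 1 ≤ c → c ≤ R s → ∃ i, 1 ≤ i ∧ i ≤ s ∧ R (i - 1) < c ∧ c ≤ R i := by
  intro s
  induction s with
  | zero => intro c h1 h2; rw [usli_R0 hR] at h2; omega
  | succ s ihs =>
    intro c h1 h2
    by_cases h : c ≤ R s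
    · obtain ⟨i, hi1, hi2, hi3, hi4⟩ := ihs c h1 h
      exact ⟨i, hi1, by omega, hi3, hi4⟩
    · exact ⟨s + 1, by omega, le_refl _, by simpa using not_le.mp h, h2⟩

end

def uPref (R : ℕ → ℕ) (t : ℕ) : Finset ℕ := (Finset.Icc 1 t).image R

lemma mem_uPref {R : ℕ → ℕ} {t z : ℕ} : z ∈ uPref R t ↔ ∃ l, 1 ≤ l ∧ l ≤ t ∧ R l = z := by
  simp [uPref, Finset.mem_image, Finset.mem_Icc, and_assoc]

lemma uPref_zero {R : ℕ → ℕ} : uPref R 0 = ∅ := by simp [uPref]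

lemma uPref_mono {R : ℕ → ℕ} {t s : ℕ} (h : t ≤ s) : uPref R t ⊆ uPref R s := by
  intro z hz; rw [mem_uPref] at *
  obtain ⟨l, h1, h2, h3⟩ := hz; exact ⟨l, h1, by omega, h3⟩

lemma uPref_card {R : ℕ → ℕ} (hmono : StrictMono R) (t : ℕ) : (uPref R t).card = t := by
  rw [uPref, Finset.card_image_of_injective _ hmono.injective, Nat.card_Icc]; omega

lemma uPref_succ {R : ℕ → ℕ} (t : ℕ) : uPref R (t + 1) = insert (R (t + 1)) (uPref R t) := by
  rw [uPref, uPref, ← Finset.insert_Icc_right_eq_Icc_add_one (by omega), Finset.image_insert]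

lemma uPref_le {R : ℕ → ℕ} (hmono : StrictMono R) {t z : ℕ} (hz : z ∈ uPref R t) : z ≤ R t := by
  rw [mem_uPref] at hz; obtain ⟨l, _, h2, rfl⟩ := hz; exact hmono.monotone h2

lemma uPref_pos {k R : ℕ → ℕ} (hR : ∀ j, R j = j + ∑ i ∈ Finset.Icc 1 j, k i)
    {t z : ℕ} (hz : z ∈ uPref R t) : 1 ≤ z := by
  rw [mem_uPref] at hz; obtain ⟨l, h1, _, rfl⟩ := hz
  have := usli_Rge hR l; omega

lemma uPref_not_Ioo {R : ℕ → ℕ} (hmono : StrictMono R) {t z i : ℕ}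
    (hz : z ∈ uPref R t) (h1 : R (i - 1) < z) (h2 : z < R i) : False := by
  rw [mem_uPref] at hz; obtain ⟨l, _, _, rfl⟩ := hz
  have a1 : i - 1 < l := hmono.lt_iff_lt.mp h1
  have a2 : l < i := hmono.lt_iff_lt.mp h2
  omega

lemma uPref_not_mem {R : ℕ → ℕ} (hmono : StrictMono R) {t b : ℕ} (hb : R t < b) :
    b ∉ uPref R t := fun h => by have := uPref_le hmono h; omega

lemma usli_NG_not {R : ℕ → ℕ} (hmono : StrictMono R) {j b i c : ℕ}
    (hb1 : R (j - 1) < b) (hb2 : b < R j) (hi1 : 1 ≤ i) (hij : i ≤ j - 1)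
    (hc : c ∈ insert b (uPref R (j - 1))) (h1 : R (i - 1) < c) (h2 : c < R i) : False := by
  rcases Finset.mem_insert.mp hc with rfl | hc
  · have e1 : R i ≤ R (j - 1) := hmono.monotone hij
    omega
  · exact uPref_not_Ioo hmono hc h1 h2

lemma usli_key_lex {k R : ℕ → ℕ} (hR : ∀ j, R j = j + ∑ i ∈ Finset.Icc 1 j, k i)
    {j : ℕ} (hj : 1 ≤ j) (x : Finset ℕ) (hxcard : x.card = j) (hxpos : ∀ e ∈ x, 1 ≤ e)
    (hxM : ∀ i, 1 ≤ i → i ≤ j - 1 → uPref R (i - 1) ⊆ x → ∀ c ∈ x, ¬(R (i - 1) < c ∧ c < R i))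
    (hxNG : ∀ b' ∈ Finset.Ioo (R (j - 1)) (R j), x ≠ insert b' (uPref R (j - 1)))
    (b : ℕ) (hb : b ∈ Finset.Ioo (R (j - 1)) (R j)) :
    monLexGT (insert b (uPref R (j - 1))).val x.val := by
  have hmono := usli_Rmono hR
  obtain ⟨hb1, hb2⟩ := Finset.mem_Ioo.mp hb
  have hbnp : b ∉ uPref R (j - 1) := uPref_not_mem hmono hb1
  have hycard : (insert b (uPref R (j - 1))).card = j := by
    rw [Finset.card_insert_of_notMem hbnp, uPref_card hmono]; omega
  obtain ⟨t, htle, htP, hmax⟩ : ∃ t, t ≤ j - 1 ∧ uPref R t ⊆ x ∧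
      (t < j - 1 → ¬ uPref R (t + 1) ⊆ x) := by
    refine ⟨Nat.findGreatest (fun l => uPref R l ⊆ x) (j - 1), Nat.findGreatest_le _,
      Nat.findGreatest_spec (P := fun l => uPref R l ⊆ x) (m := 0) (by omega)
        (by show uPref R 0 ⊆ x; rw [uPref_zero]; exact Finset.empty_subset x), ?_⟩
    intro hlt
    exact Nat.findGreatest_is_greatest (P := fun l => uPref R l ⊆ x) (n := j - 1)
      (k := Nat.findGreatest (fun l => uPref R l ⊆ x) (j - 1) + 1) (by omega) (by omega)
  rcases eq_or_lt_of_le htle with hteq | htlt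
  · -- t = j - 1 : x ⊇ uPref (j-1)
    have hpsub : uPref R (j - 1) ⊆ x := hteq ▸ htP
    have hcard1 : (x \ uPref R (j - 1)).card = 1 := by
      rw [Finset.card_sdiff_of_subset hpsub, uPref_card hmono]; omega
    obtain ⟨c, hc⟩ := Finset.card_eq_one.mp hcard1
    have hxeq : x = insert c (uPref R (j - 1)) := by
      have := Finset.union_sdiff_of_subset hpsub
      rw [hc] at this
      rw [← this, Finset.union_comm]; rfl
    have hcx : c ∈ x := by rw [hxeq]; exact Finset.mem_insert_self _ _
    have hcnp : c ∉ uPref R (j - 1) := by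
      have : c ∈ x \ uPref R (j - 1) := hc ▸ Finset.mem_singleton_self c
      exact (Finset.mem_sdiff.mp this).2
    have hc1 : 1 ≤ c := hxpos c hcx
    have hcgt : R (j - 1) < c := by
      by_contra hle
      push_neg at hle
      obtain ⟨i, hi1, hi2, hi3, hi4⟩ := usli_cover hR (j - 1) c hc1 hle
      rcases eq_or_lt_of_le hi4 with hceq | hclt
      · exact hcnp (mem_uPref.mpr ⟨i, hi1, hi2, hceq.symm⟩)
      · exact hxM i hi1 hi2 (Finset.Subset.trans (uPref_mono (by omega)) hpsub) c hcx ⟨hi3, hclt⟩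
    have hcge : R j ≤ c := by
      by_contra hlt
      push_neg at hlt
      exact hxNG c (Finset.mem_Ioo.mpr ⟨hcgt, hlt⟩) hxeq
    apply usli_lex_finset (by omega) (m := b) (Finset.mem_insert_self _ _)
    · rw [hxeq]
      intro hmem
      rcases Finset.mem_insert.mp hmem with rfl | hmem
      · omega
      · exact hbnp hmem
    · intro z hzb
      rw [hxeq]
      constructor
      · intro h
        rcases Finset.mem_insert.mp h with rfl | h
        · omega
        · exact Finset.mem_insert_of_mem h
      · intro h
        rcases Finset.mem_insert.mp h with rfl | h
        · omega
        · exact Finset.mem_insert_of_mem h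
  · -- t < j - 1
    have hnot : ¬ uPref R (t + 1) ⊆ x := hmax htlt
    have hRt1 : R (t + 1) ∉ x := by
      intro hmem
      apply hnot
      rw [uPref_succ]
      exact Finset.insert_subset hmem htP
    have hmy : R (t + 1) ∈ insert b (uPref R (j - 1)) :=
      Finset.mem_insert_of_mem (mem_uPref.mpr ⟨t + 1, by omega, by omega, rfl⟩)
    apply usli_lex_finset (by omega) (m := R (t + 1)) hmy hRt1
    intro z hzR
    constructor
    · intro h
      rcases Finset.mem_insert.mp h with rfl | h
      · have : R (t + 1) ≤ R (j - 1) := hmono.monotone (by omega)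
        omega
      · rw [mem_uPref] at h
        obtain ⟨l, hl1, hl2, rfl⟩ := h
        have : l < t + 1 := hmono.lt_iff_lt.mp hzR
        exact htP (mem_uPref.mpr ⟨l, hl1, by omega, rfl⟩)
    · intro h
      have hz1 : 1 ≤ z := hxpos z h
      obtain ⟨i, hi1, hi2, hi3, hi4⟩ := usli_cover hR (t + 1) z hz1 (by omega)
      rcases eq_or_lt_of_le hi4 with hzeq | hzlt
      · subst hzeq
        have hile : i ≤ t := by
          rcases eq_or_lt_of_le hi2 with rfl | h'
          · exact absurd h hRt1
          · omega
        exact Finset.mem_insert_of_mem (mem_uPref.mpr ⟨i, hi1, by omega, rfl⟩)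
      · exact absurd ⟨hi3, hzlt⟩
          (hxM i hi1 (by omega) (Finset.Subset.trans (uPref_mono (by omega)) htP) z h)

lemma usli_mem_L_iff (L : Set (Multiset ℕ)) (hL : IsUSLI L)
    (k : ℕ → ℕ) (hk : ∀ i : ℕ, 1 ≤ i → {m ∈ minGen L | Multiset.card m = i}.ncard = k i)
    (d : ℕ) (hd : 1 ≤ d) (hkd : k d ≠ 0) (hlast : ∀ i, d < i → k i = 0)
    (R : ℕ → ℕ) (hR : ∀ j, R j = j + ∑ i ∈ Finset.Icc 1 j, k i) :
    ∀ (F : Finset ℕ), (∀ x ∈ F, 1 ≤ x) →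
      ((F.val : Multiset ℕ) ∈ L ↔ ∃ i, 1 ≤ i ∧ i ≤ d ∧ uPref R (i - 1) ⊆ F ∧
        ∃ b ∈ F, R (i - 1) < b ∧ b < R i) := by
  have hmono := usli_Rmono hR
  have hkle : ∀ j, 1 ≤ j → k j ≠ 0 → j ≤ d := by
    intro j _ hkj; by_contra h; exact hkj (hlast j (by omega))
  suffices H : ∀ (j : ℕ) (F : Finset ℕ), F.card = j → (∀ x ∈ F, 1 ≤ x) →
      ((F.val : Multiset ℕ) ∈ L ↔ ∃ i, 1 ≤ i ∧ i ≤ d ∧ uPref R (i - 1) ⊆ F ∧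
        ∃ b ∈ F, R (i - 1) < b ∧ b < R i) by
    exact fun F hF => H F.card F rfl hF
  intro j
  induction j using Nat.strong_induction_on with
  | _ j IH =>
  intro F hFcard hFpos
  rcases Nat.eq_zero_or_pos j with rfl | hj
  · -- base case : F = ∅
    have hFe : F = ∅ := Finset.card_eq_zero.mp hFcard
    subst hFe
    constructor
    · intro h0
      exfalso
      have hSd : {m ∈ minGen L | Multiset.card m = d} = ∅ := by
        ext m
        simp only [Set.mem_setOf_eq, Set.mem_empty_iff_false, iff_false, not_and]
        intro hm
        have := hm.2 0 h0 (Multiset.zero_le m)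
        rw [← this]
        simp; omega
      have := hk d hd
      rw [hSd] at this
      simp at this
      omega
    · rintro ⟨i, _, _, _, b, hb, _⟩
      exact absurd hb (Finset.notMem_empty b)
  · -- inductive step, j ≥ 1
    have hRsj : R j = R (j - 1) + 1 + k j := by
      have := usli_Rsucc hR (j - 1)
      have hj1 : j - 1 + 1 = j := by omega
      rw [hj1] at this
      exact this
    -- the candidate new generators
    set NGf : Finset (Multiset ℕ) :=
      (Finset.Ioo (R (j - 1)) (R j)).image (fun b => (insert b (uPref R (j - 1))).val) with hNGf
    have hIoocard : (Finset.Ioo (R (j - 1)) (R j)).card = k j := by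
      rw [Nat.card_Ioo]; omega
    have hNGcard : NGf.card = k j := by
      rw [hNGf, Finset.card_image_of_injOn, hIoocard]
      intro b1 hb1 b2 hb2 heq
      have h1 : R (j - 1) < b1 := (Finset.mem_Ioo.mp hb1).1
      have heq2 : insert b1 (uPref R (j - 1)) = insert b2 (uPref R (j - 1)) :=
        Finset.val_inj.mp heq
      have : b1 ∈ insert b2 (uPref R (j - 1)) := heq2 ▸ Finset.mem_insert_self _ _
      rcases Finset.mem_insert.mp this with h | h
      · exact h
      · exact absurd h (uPref_not_mem hmono h1)
    -- any proper divisor yields a witness with i ≤ j - 1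
    have claim_div : ∀ (z : Finset ℕ), z.card = j → (∀ e ∈ z, 1 ≤ e) →
        ∀ m' ∈ L, m' ≤ z.val → m' ≠ z.val →
        ∃ i, 1 ≤ i ∧ i ≤ d ∧ i ≤ j - 1 ∧ uPref R (i - 1) ⊆ z ∧
          ∃ c ∈ z, R (i - 1) < c ∧ c < R i := by
      intro z hzcard hzpos m' hm'L hle hne
      have hnodup : m'.Nodup := Multiset.nodup_of_le hle z.nodup
      set G' : Finset ℕ := ⟨m', hnodup⟩ with hG'
      have hsub : G' ⊆ z := Finset.val_le_iff.mp hle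
      have hcardlt : G'.card < j := by
        have h1 : G'.card ≤ j := by
          rw [← hzcard]; exact Finset.card_le_card hsub
        rcases eq_or_lt_of_le h1 with he | h
        · exfalso
          apply hne
          exact Multiset.eq_of_le_of_card_le hle (by
            show Multiset.card z.val ≤ Multiset.card m'
            have : Multiset.card m' = G'.card := rfl
            rw [this, he, ← hzcard]; rfl)
        · exact h
      obtain ⟨G, hG'G, hGz, hGcard⟩ :=
        Finset.exists_subsuperset_card_eq hsub (n := j - 1) (by omega) (by omega)
      have hGL : (G.val : Multiset ℕ) ∈ L := hL.1 m' hm'L G.val (le_trans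
        (by exact Finset.val_le_iff.mpr hG'G) (le_refl _))
      have hGpos : ∀ e ∈ G, 1 ≤ e := fun e he => hzpos e (hGz he)
      obtain ⟨i, hi1, hid, hpref, c, hcG, hc1, hc2⟩ := (IH (j - 1) (by omega) G hGcard hGpos).mp hGL
      have hcnp : c ∉ uPref R (i - 1) := uPref_not_mem hmono hc1
      have hincl : insert c (uPref R (i - 1)) ⊆ G := Finset.insert_subset hcG hpref
      have hij : i ≤ j - 1 := by
        have h1 : (insert c (uPref R (i - 1))).card ≤ G.card := Finset.card_le_card hincl
        rw [Finset.card_insert_of_notMem hcnp, uPref_card hmono, hGcard] at h1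
        omega
      exact ⟨i, hi1, hid, hij, hpref.trans hGz, c, hGz hcG, hc1, hc2⟩
    -- minimal generators of degree j are exactly NGf
    have hSsub : {m ∈ minGen L | Multiset.card m = j} ⊆ ↑NGf := by
      intro x hx
      by_contra hxNG
      obtain ⟨hxmin, hxcardj⟩ := hx
      have hxL : x ∈ L := hxmin.1
      obtain ⟨hxnodup, hxpos⟩ := hL.2.1 x hxmin
      set xF : Finset ℕ := ⟨x, hxnodup⟩ with hxF
      have hxFcard : xF.card = j := hxcardj
      have hNS : ∀ m ∈ NGf, m ∈ {m ∈ minGen L | Multiset.card m = j} := by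
        intro m hm
        rw [hNGf, Finset.mem_image] at hm
        obtain ⟨b, hb, rfl⟩ := hm
        obtain ⟨hb1, hb2⟩ := Finset.mem_Ioo.mp hb
        have hjd : j ≤ d := hkle j hj (by omega)
        have hbnp : b ∉ uPref R (j - 1) := uPref_not_mem hmono hb1
        have hycard : (insert b (uPref R (j - 1))).card = j := by
          rw [Finset.card_insert_of_notMem hbnp, uPref_card hmono]; omega
        have hypos : ∀ e ∈ insert b (uPref R (j - 1)), 1 ≤ e := by
          intro e he
          rcases Finset.mem_insert.mp he with rfl | he
          · omega
          · exact uPref_pos hR he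
        have hxM : ∀ i, 1 ≤ i → i ≤ j - 1 → uPref R (i - 1) ⊆ xF →
            ∀ c ∈ xF, ¬(R (i - 1) < c ∧ c < R i) := by
          rintro i hi1 hij hpref c hcx ⟨hc1, hc2⟩
          have hcnp : c ∉ uPref R (i - 1) := uPref_not_mem hmono hc1
          set G0 : Finset ℕ := insert c (uPref R (i - 1)) with hG0
          have hG0card : G0.card = i := by
            rw [hG0, Finset.card_insert_of_notMem hcnp, uPref_card hmono]; omega
          have hG0sub : G0 ⊆ xF := Finset.insert_subset hcx hpref
          have hG0pos : ∀ e ∈ G0, 1 ≤ e := fun e he => hxpos e (hG0sub he)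
          have hG0L : (G0.val : Multiset ℕ) ∈ L :=
            (IH i (by omega) G0 hG0card hG0pos).mpr
              ⟨i, hi1, by omega, Finset.subset_insert _ _, c, Finset.mem_insert_self _ _, hc1, hc2⟩
          have := hxmin.2 G0.val hG0L (Finset.val_le_iff.mpr hG0sub)
          have hc : Multiset.card G0.val = Multiset.card x := by rw [this]
          rw [show Multiset.card G0.val = G0.card from rfl, hG0card, hxcardj] at hc
          omega
        have hxNG' : ∀ b' ∈ Finset.Ioo (R (j - 1)) (R j), xF ≠ insert b' (uPref R (j - 1)) := by
          intro b' hb' heq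
          apply hxNG
          rw [hNGf]
          simp only [Finset.coe_image, Set.mem_image, Finset.mem_coe]
          exact ⟨b', hb', by rw [← heq]⟩
        have hlex : monLexGT (insert b (uPref R (j - 1))).val x :=
          usli_key_lex hR hj xF hxFcard hxpos hxM hxNG' b hb
        have hyL : ((insert b (uPref R (j - 1))).val : Multiset ℕ) ∈ L :=
          hL.2.2.2 x hxL _ (insert b (uPref R (j - 1))).nodup hypos
            (by rw [show Multiset.card (insert b (uPref R (j - 1))).val
                  = (insert b (uPref R (j - 1))).card from rfl, hycard, hxcardj]) hlex
        refine ⟨⟨hyL, ?_⟩, by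
          rw [show Multiset.card (insert b (uPref R (j - 1))).val
            = (insert b (uPref R (j - 1))).card from rfl, hycard]⟩
        intro m' hm'L hle
        by_contra hne
        obtain ⟨i, hi1, _, hij, _, c, hcy, hc1, hc2⟩ :=
          claim_div (insert b (uPref R (j - 1))) hycard hypos m' hm'L hle hne
        exact usli_NG_not hmono hb1 hb2 hi1 hij hcy hc1 hc2
      have hins : insert x (↑NGf : Set (Multiset ℕ)) ⊆ {m ∈ minGen L | Multiset.card m = j} := by
        intro m hm
        rcases Set.mem_insert_iff.mp hm with rfl | hm
        · exact ⟨hxmin, hxcardj⟩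
        · exact hNS m hm
      have hfin := hL.2.2.1 j
      have hle := Set.ncard_le_ncard hins hfin
      rw [Set.ncard_insert_of_notMem hxNG (Finset.finite_toSet NGf)] at hle
      rw [Set.ncard_coe_finset, hNGcard, hk j (by omega)] at hle
      omega
    have hSeq : {m ∈ minGen L | Multiset.card m = j} = ↑NGf := by
      apply Set.eq_of_subset_of_ncard_le hSsub
      rw [Set.ncard_coe_finset, hNGcard, hk j (by omega)]
    constructor
    · intro hFL
      by_cases hmin : ∀ m' ∈ L, m' ≤ F.val → m' = F.val
      · have hFS : (F.val : Multiset ℕ) ∈ {m ∈ minGen L | Multiset.card m = j} :=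
          ⟨⟨hFL, hmin⟩, by rw [show Multiset.card F.val = F.card from rfl, hFcard]⟩
        rw [hSeq] at hFS
        rw [Finset.mem_coe, hNGf, Finset.mem_image] at hFS
        obtain ⟨b, hb, heq⟩ := hFS
        obtain ⟨hb1, hb2⟩ := Finset.mem_Ioo.mp hb
        have hFeq : F = insert b (uPref R (j - 1)) := Finset.val_inj.mp heq.symm
        refine ⟨j, hj, hkle j hj (by omega), ?_, b, ?_, hb1, hb2⟩
        · rw [hFeq]; exact Finset.subset_insert _ _
        · rw [hFeq]; exact Finset.mem_insert_self _ _
      · push_neg at hmin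
        obtain ⟨m', hm'L, hle, hne⟩ := hmin
        obtain ⟨i, hi1, hid, _, hpref, c, hcF, hc1, hc2⟩ :=
          claim_div F hFcard hFpos m' hm'L hle hne
        exact ⟨i, hi1, hid, hpref, c, hcF, hc1, hc2⟩
    · rintro ⟨i, hi1, hid, hpref, b, hbF, hb1, hb2⟩
      have hbnp : b ∉ uPref R (i - 1) := uPref_not_mem hmono hb1
      set G0 : Finset ℕ := insert b (uPref R (i - 1)) with hG0
      have hG0card : G0.card = i := by
        rw [hG0, Finset.card_insert_of_notMem hbnp, uPref_card hmono]; omega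
      have hG0sub : G0 ⊆ F := Finset.insert_subset hbF hpref
      have hG0pos : ∀ e ∈ G0, 1 ≤ e := fun e he => hFpos e (hG0sub he)
      have hile : i ≤ j := by
        have := Finset.card_le_card hG0sub
        rw [hG0card, hFcard] at this
        exact this
      rcases eq_or_lt_of_le hile with heq | hlt
      · -- i = j : F is itself a new generator
        subst heq
        have hFG0 : G0 = F := Finset.eq_of_subset_of_card_le hG0sub (by omega)
        have hmem : (F.val : Multiset ℕ) ∈ NGf := by
          rw [hNGf, Finset.mem_image]
          exact ⟨b, Finset.mem_Ioo.mpr ⟨hb1, hb2⟩, by rw [← hFG0, hG0]⟩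
        have h2 : (F.val : Multiset ℕ) ∈ (↑NGf : Set (Multiset ℕ)) := Finset.mem_coe.mpr hmem
        rw [← hSeq] at h2
        exact h2.1.1
      · have hG0L : (G0.val : Multiset ℕ) ∈ L :=
          (IH i (by omega) G0 hG0card hG0pos).mpr
            ⟨i, hi1, hid, Finset.subset_insert _ _, b, Finset.mem_insert_self _ _, hb1, hb2⟩
        exact hL.1 G0.val hG0L F.val (Finset.val_le_iff.mpr hG0sub)


/-- if Γ is a USLI complex on [n] with I_Γ = L(k_•), k_d the last nonzero
entry, and R_d = d + Σ k_i = n + 1, then the reduced Euler characteristic of Γ is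
(−1)^{d−2}, i.e. Σ_{j ≥ −1} (−1)^j f_j(Γ) = (−1)^d (the summand for a face F being
(−1)^{|F|−1}). -/
theorem usli_complex_euler_characteristic (n : ℕ)
    (L : Set (Multiset ℕ)) (hL : IsUSLI L) (hL0 : L.Nonempty)
    (k : ℕ → ℕ) (hk : ∀ i : ℕ, 1 ≤ i → {m ∈ minGen L | Multiset.card m = i}.ncard = k i)
    (d : ℕ) (hd : 1 ≤ d) (hkd : k d ≠ 0) (hlast : ∀ i, d < i → k i = 0)
    (R : ℕ → ℕ) (hR : ∀ j, R j = j + ∑ i ∈ Finset.Icc 1 j, k i)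
    (hRd : R d = n + 1)
    (Γ : Finset (Finset ℕ)) (hΓV : ∀ F ∈ Γ, F ⊆ Finset.Icc 1 n)
    (hΓL : ∀ F : Finset ℕ, F ⊆ Finset.Icc 1 n → (F ∈ Γ ↔ (F.val : Multiset ℕ) ∉ L)) :
    ∑ F ∈ Γ, (-1 : ℤ) ^ (F.card + 1) = (-1 : ℤ) ^ d := by
  classical
  have hmono := usli_Rmono hR
  have hML := usli_mem_L_iff L hL k hk d hd hkd hlast R hR
  have hRd1 : R (d - 1) + 1 + k d = n + 1 := by
    have := usli_Rsucc hR (d - 1)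
    rw [show d - 1 + 1 = d by omega] at this
    omega
  set T : ℕ → Finset (Finset ℕ) :=
    fun t => (Finset.Ioc (R (t + 1)) n).powerset.image (fun G => uPref R t ∪ G) with hT
  -- structure of members of T t
  have hTmem : ∀ t F, F ∈ T t ↔ ∃ G ⊆ Finset.Ioc (R (t + 1)) n, F = uPref R t ∪ G := by
    intro t F
    rw [hT]
    simp only [Finset.mem_image, Finset.mem_powerset]
    constructor
    · rintro ⟨G, h1, rfl⟩; exact ⟨G, h1, rfl⟩
    · rintro ⟨G, h1, rfl⟩; exact ⟨G, h1, rfl⟩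
  have hGamma : Γ = (Finset.range d).biUnion T := by
    ext F
    constructor
    · intro hF
      have hFsub := hΓV F hF
      have hFL : (F.val : Multiset ℕ) ∉ L := (hΓL F hFsub).mp hF
      have hFpos : ∀ x ∈ F, 1 ≤ x := fun x hx => (Finset.mem_Icc.mp (hFsub hx)).1
      have hFn : ∀ x ∈ F, x ≤ n := fun x hx => (Finset.mem_Icc.mp (hFsub hx)).2
      obtain ⟨t, htle, htP, hmax⟩ : ∃ t, t ≤ d - 1 ∧ uPref R t ⊆ F ∧
          (t < d - 1 → ¬ uPref R (t + 1) ⊆ F) := by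
        refine ⟨Nat.findGreatest (fun l => uPref R l ⊆ F) (d - 1), Nat.findGreatest_le _,
          Nat.findGreatest_spec (P := fun l => uPref R l ⊆ F) (m := 0) (by omega)
            (by show uPref R 0 ⊆ F; rw [uPref_zero]; exact Finset.empty_subset F), ?_⟩
        intro hlt
        exact Nat.findGreatest_is_greatest (P := fun l => uPref R l ⊆ F) (n := d - 1)
          (k := Nat.findGreatest (fun l => uPref R l ⊆ F) (d - 1) + 1) (by omega) (by omega)
      have hRt1 : R (t + 1) ∉ F := by
        intro hmem
        rcases eq_or_lt_of_le htle with hteq | htlt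
        · have : R (t + 1) = n + 1 := by rw [hteq, show d - 1 + 1 = d by omega, hRd]
          have := hFn _ hmem
          omega
        · exact hmax htlt (by rw [uPref_succ]; exact Finset.insert_subset hmem htP)
      rw [Finset.mem_biUnion]
      refine ⟨t, Finset.mem_range.mpr (by omega), (hTmem t F).mpr ⟨F \ uPref R t, ?_, ?_⟩⟩
      · intro z hz
        obtain ⟨hzF, hznp⟩ := Finset.mem_sdiff.mp hz
        rw [Finset.mem_Ioc]
        refine ⟨?_, hFn z hzF⟩
        by_contra hle
        push_neg at hle
        obtain ⟨i, hi1, hi2, hi3, hi4⟩ := usli_cover hR (t + 1) z (hFpos z hzF) hle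
        rcases eq_or_lt_of_le hi4 with hzeq | hzlt
        · subst hzeq
          rcases eq_or_lt_of_le hi2 with h | h
          · rw [h] at hzF; exact hRt1 hzF
          · exact hznp (mem_uPref.mpr ⟨i, hi1, by omega, rfl⟩)
        · exact hFL ((hML F hFpos).mpr
            ⟨i, hi1, by omega, (uPref_mono (by omega)).trans htP, z, hzF, hi3, hzlt⟩)
      · exact (Finset.union_sdiff_of_subset htP).symm
    · intro hF
      obtain ⟨t, htmem, hFT⟩ := Finset.mem_biUnion.mp hF
      obtain ⟨G, hGsub, rfl⟩ := (hTmem t _).mp hFT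
      have htd : t < d := Finset.mem_range.mp htmem
      have hsub : uPref R t ∪ G ⊆ Finset.Icc 1 n := by
        intro z hz
        rw [Finset.mem_Icc]
        rcases Finset.mem_union.mp hz with h | h
        · have h1 := uPref_pos hR h
          have h2 := uPref_le hmono h
          have h3 : R t < R (t + 1) := hmono (by omega)
          have h4 : R (t + 1) ≤ R d := hmono.monotone (by omega)
          omega
        · have := Finset.mem_Ioc.mp (hGsub h)
          omega
      have hpos : ∀ x ∈ uPref R t ∪ G, 1 ≤ x := fun x hx => (Finset.mem_Icc.mp (hsub hx)).1
      rw [hΓL _ hsub]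
      rw [hML _ hpos]
      rintro ⟨i, hi1, hid, hpref, b, hbF, hb1, hb2⟩
      rcases Finset.mem_union.mp hbF with h | h
      · exact uPref_not_Ioo hmono h hb1 hb2
      · have hbt1 : R (t + 1) < b := (Finset.mem_Ioc.mp (hGsub h)).1
        have hti : t + 1 < i := by
          have : R (t + 1) < R i := by omega
          exact hmono.lt_iff_lt.mp this
        have hRmem : R (t + 1) ∈ uPref R (i - 1) := mem_uPref.mpr ⟨t + 1, by omega, by omega, rfl⟩
        rcases Finset.mem_union.mp (hpref hRmem) with h' | h'
        · rw [mem_uPref] at h'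
          obtain ⟨l, _, hl2, hleq⟩ := h'
          have : l = t + 1 := hmono.injective hleq
          omega
        · have := (Finset.mem_Ioc.mp (hGsub h')).1
          omega
  -- disjointness
  have hkey : ∀ a b : ℕ, a < b → ∀ F, F ∈ T a → F ∈ T b → False := by
    intro a b hab F hFa hFb
    obtain ⟨Ga, hGa, rfl⟩ := (hTmem a F).mp hFa
    obtain ⟨Gb, hGb, hFeq⟩ := (hTmem b _).mp hFb
    have hmem : R (a + 1) ∈ uPref R a ∪ Ga := by
      rw [hFeq]
      exact Finset.mem_union_left _ (mem_uPref.mpr ⟨a + 1, by omega, by omega, rfl⟩)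
    rcases Finset.mem_union.mp hmem with h | h
    · rw [mem_uPref] at h
      obtain ⟨l, _, hl2, hleq⟩ := h
      have : l = a + 1 := hmono.injective hleq
      omega
    · have := (Finset.mem_Ioc.mp (hGa h)).1
      omega
  have hdisj : Set.PairwiseDisjoint (↑(Finset.range d) : Set ℕ) T := by
    intro a _ b _ hab
    rw [Function.onFun, Finset.disjoint_left]
    intro F hFa hFb
    rcases lt_or_gt_of_ne hab with h | h
    · exact hkey a b h F hFa hFb
    · exact hkey b a h F hFb hFa
  rw [hGamma, Finset.sum_biUnion hdisj]
  -- inner sums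
  have hinner : ∀ t ∈ Finset.range d, ∑ F ∈ T t, (-1 : ℤ) ^ (F.card + 1)
      = (-1 : ℤ) ^ (t + 1) * (if Finset.Ioc (R (t + 1)) n = ∅ then 1 else 0) := by
    intro t htmem
    rw [hT]
    rw [Finset.sum_image (by
      intro G1 h1 G2 h2 heq
      have hd1 : Disjoint (uPref R t) G1 := by
        rw [Finset.disjoint_left]
        intro z hz1 hz2
        have e1 := uPref_le hmono hz1
        have e2 := (Finset.mem_Ioc.mp (Finset.mem_powerset.mp h1 hz2)).1
        have e3 : R t < R (t + 1) := hmono (by omega)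
        omega
      have hd2 : Disjoint (uPref R t) G2 := by
        rw [Finset.disjoint_left]
        intro z hz1 hz2
        have e1 := uPref_le hmono hz1
        have e2 := (Finset.mem_Ioc.mp (Finset.mem_powerset.mp h2 hz2)).1
        have e3 : R t < R (t + 1) := hmono (by omega)
        omega
      rw [← Finset.union_sdiff_cancel_left hd1, ← Finset.union_sdiff_cancel_left hd2,
        show uPref R t ∪ G1 = uPref R t ∪ G2 from heq])]
    have hterm : ∀ G ∈ (Finset.Ioc (R (t + 1)) n).powerset,
        (-1 : ℤ) ^ ((uPref R t ∪ G).card + 1) = (-1 : ℤ) ^ (t + 1) * (-1 : ℤ) ^ G.card := by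
      intro G hG
      have hdisjG : Disjoint (uPref R t) G := by
        rw [Finset.disjoint_left]
        intro z hz1 hz2
        have e1 := uPref_le hmono hz1
        have e2 := (Finset.mem_Ioc.mp (Finset.mem_powerset.mp hG hz2)).1
        have e3 : R t < R (t + 1) := hmono (by omega)
        omega
      rw [Finset.card_union_of_disjoint hdisjG, uPref_card hmono]
      rw [show t + G.card + 1 = (t + 1) + G.card by omega, pow_add]
    rw [Finset.sum_congr rfl hterm, ← Finset.mul_sum]
    congr 1
    rw [Finset.sum_powerset_neg_one_pow_card]
  rw [Finset.sum_congr rfl hinner]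
  -- only t = d - 1 contributes
  rw [Finset.sum_eq_single (d - 1)]
  · rw [show d - 1 + 1 = d by omega, hRd]
    rw [if_pos (by rw [Finset.Ioc_eq_empty_iff]; omega)]
    rw [mul_one]
  · intro t htmem hne
    have htd : t < d := Finset.mem_range.mp htmem
    have hne' : Finset.Ioc (R (t + 1)) n ≠ ∅ := by
      have h1 : R (t + 1) ≤ R (d - 1) := hmono.monotone (by omega)
      have h2 : R (t + 1) < n := by omega
      intro he
      rw [Finset.Ioc_eq_empty_iff] at he
      omega
    rw [if_neg hne', mul_zero]
  · intro h
    exact absurd (Finset.mem_range.mpr (by omega)) h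
end
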